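/- Let F be 2γ-replacement-stable and satisfy 0 ≤ F(S,o) ≤ λ for all S ∈ O^M and o ∈ O. Then for every δ ∈ (0,1), with probability at least 1 − δ over the draw of the i.i.d. sample S = (Z_1,…,Z_M) ~ μ^M, the generalization gap satisfies R(S) − R_emp(S) ≤ 2γ + (4Mγ + λ)·√(log(1/δ)/(2M)). -/

import Mathlib

/-!
Changing one sample point moves the true risk by at most `2γ` (stability) and the empirical risk
by at most `2γ + λ / M` (stability for every summand, plus the range `λ` of the one summand whose
evaluation point is replaced). So the generalization gap has bounded differences `4γ + λ / M`, and
McDiarmid's inequality keeps it within `(4Mγ + λ) √(log (1/δ) / (2M))` of its mean with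
probability `1 - δ`. The mean is at most `2γ`: exchanging `Z_m` with an independent copy `z`
shows `𝔼 F(S, Z_m) = 𝔼 F(S^{m ← z}, z) ≥ 𝔼 R(S) - 2γ`.

McDiarmid's inequality itself follows by induction on the number of coordinates: conditionally on
the others, the first coordinate contributes an mgf factor bounded by Hoeffding's lemma, and the
Chernoff bound turns the resulting sub-Gaussian estimate into the tail bound.
-/

open MeasureTheory ProbabilityTheory Real Set
open scoped NNReal

section Integral

variable {Ω : Type*} [MeasurableSpace Ω] {μ : Measure Ω} [IsProbabilityMeasure μ]

lemma integral_mem_Icc_of_forall_mem {f : Ω → ℝ} {a b : ℝ} (hf : AEMeasurable f μ)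
    (hfab : ∀ x, f x ∈ Icc a b) : ∫ x, f x ∂μ ∈ Icc a b := by
  have hint : Integrable f μ := .of_mem_Icc a b hf (ae_of_all _ hfab)
  constructor
  · simpa using integral_mono (integrable_const a) hint fun x => (hfab x).1
  · simpa using integral_mono hint (integrable_const b) fun x => (hfab x).2

lemma abs_integral_sub_integral_le {f g : Ω → ℝ} {c : ℝ} (hf : Integrable f μ)
    (hg : Integrable g μ) (hfg : ∀ x, |f x - g x| ≤ c) :
    |∫ x, f x ∂μ - ∫ x, g x ∂μ| ≤ c := by
  rw [← integral_sub hf hg]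
  simpa using norm_integral_le_of_norm_le_const (μ := μ) (f := fun x => f x - g x) (ae_of_all _ hfg)

end Integral

lemma exists_forall_mem_Icc_of_abs_sub_le {β : Type*} [Nonempty β] {f : β → ℝ} {c : ℝ}
    (hf : ∀ x y, |f x - f y| ≤ c) : ∃ a, ∀ x, f x ∈ Icc a (a + c) := by
  have hbdd : BddBelow (range f) := by
    obtain ⟨x₀⟩ := ‹Nonempty β›
    exact ⟨f x₀ - c, by rintro _ ⟨x, rfl⟩; linarith [(abs_le.1 (hf x₀ x)).2]⟩
  refine ⟨⨅ x, f x, fun x => ⟨ciInf_le hbdd x, ?_⟩⟩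
  have : f x - c ≤ ⨅ y, f y := le_ciInf fun y => by linarith [(abs_le.1 (hf x y)).2]
  linarith

section Subgaussian

variable {Ω : Type*} [MeasurableSpace Ω] {μ : Measure Ω} [IsProbabilityMeasure μ]

lemma hasSubgaussianMGF_sub_integral_of_abs_sub_le {f : Ω → ℝ} {c : ℝ≥0} (hf : Measurable f)
    (hfc : ∀ x y, |f x - f y| ≤ c) :
    HasSubgaussianMGF (fun x => f x - ∫ y, f y ∂μ) ((c / 2) ^ 2) μ := by
  have := nonempty_of_isProbabilityMeasure μ
  obtain ⟨a, ha⟩ := exists_forall_mem_Icc_of_abs_sub_le hfc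
  simpa using hasSubgaussianMGF_of_mem_Icc hf.aemeasurable (ae_of_all μ ha)

lemma ProbabilityTheory.HasSubgaussianMGF.ofReal_one_sub_le_measure_le {X : Ω → ℝ} {v : ℝ≥0}
    (hX : HasSubgaussianMGF X v μ) {δ : ℝ} (hδ0 : 0 < δ) (hδ1 : δ ≤ 1) :
    ENNReal.ofReal (1 - δ) ≤ μ {ω | X ω ≤ √(2 * v * log (1 / δ))} := by
  set t := √(2 * v * log (1 / δ))
  suffices hc : μ {ω | X ω ≤ t}ᶜ ≤ ENNReal.ofReal δ by
    rw [ENNReal.ofReal_sub _ hδ0.le, ENNReal.ofReal_one, tsub_le_iff_right]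
    calc 1 = μ ({ω | X ω ≤ t} ∪ {ω | X ω ≤ t}ᶜ) := by simp
      _ ≤ _ := (measure_union_le _ _).trans (by gcongr)
  rcases eq_zero_or_pos v with rfl | hv
  · refine le_of_eq_of_le (measure_mono_null (fun ω hω => ?_)
      (ae_iff.1 hX.ae_eq_zero_of_hasSubgaussianMGF_zero)) bot_le
    exact ((sqrt_nonneg _).trans_lt (not_le.1 hω)).ne'
  have hL : 0 ≤ log (1 / δ) := log_nonneg (one_le_one_div hδ0 hδ1)
  have ht : t ^ 2 = 2 * v * log (1 / δ) := sq_sqrt (by positivity)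
  calc μ {ω | X ω ≤ t}ᶜ ≤ μ {ω | t ≤ X ω} := measure_mono fun ω (hω : ¬ X ω ≤ t) => (not_le.1 hω).le
    _ = ENNReal.ofReal (μ.real {ω | t ≤ X ω}) := (ofReal_measureReal).symm
    _ ≤ ENNReal.ofReal (exp (-t ^ 2 / (2 * v))) :=
      ENNReal.ofReal_le_ofReal (hX.measure_ge_le (sqrt_nonneg _))
    _ = ENNReal.ofReal δ := by
      rw [ht, neg_div, mul_div_cancel_left₀ _ (by positivity), one_div, log_inv, neg_neg,
        exp_log hδ0]

end Subgaussian

section Prod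

variable {α β : Type*} [MeasurableSpace α] [MeasurableSpace β]
  {μ : Measure α} {ν : Measure β} [IsProbabilityMeasure μ] [IsProbabilityMeasure ν]

lemma hasSubgaussianMGF_prod_sub_integral {f : α × β → ℝ} {a b : ℝ} {c v : ℝ≥0}
    (hf : Measurable f) (hfab : ∀ p, f p ∈ Icc a b) (hfc : ∀ x x' y, |f (x, y) - f (x', y)| ≤ c)
    (hv : HasSubgaussianMGF (fun y => ∫ x, f (x, y) ∂μ - ∫ y', ∫ x, f (x, y') ∂μ ∂ν) v ν) :
    HasSubgaussianMGF (fun p => f p - ∫ q, f q ∂(μ.prod ν)) ((c / 2) ^ 2 + v) (μ.prod ν) := by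
  have hf_int : Integrable f (μ.prod ν) := .of_mem_Icc a b hf.aemeasurable (ae_of_all _ hfab)
  set h : β → ℝ := fun y => ∫ x, f (x, y) ∂μ
  set I := ∫ q, f q ∂(μ.prod ν)
  have hI : ∫ y, h y ∂ν = I := (integral_prod_symm f hf_int).symm
  rw [hI] at hv
  have hexp_int (t : ℝ) : Integrable (fun p => exp (t * (f p - I))) (μ.prod ν) :=
    integrable_exp_mul_of_mem_Icc (a := a - I) (b := b - I) (by fun_prop)
      (ae_of_all _ fun p => ⟨by linarith [(hfab p).1], by linarith [(hfab p).2]⟩)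
  have hinner (t : ℝ) (y : β) :
      ∫ x, exp (t * (f (x, y) - I)) ∂μ ≤ exp ((c / 2) ^ 2 * t ^ 2 / 2) * exp (t * (h y - I)) := by
    have hHoeffding := (hasSubgaussianMGF_sub_integral_of_abs_sub_le (μ := μ)
      (hf.comp measurable_prodMk_right) fun x x' => hfc x x' y).mgf_le t
    calc ∫ x, exp (t * (f (x, y) - I)) ∂μ
        = (∫ x, exp (t * (f (x, y) - h y)) ∂μ) * exp (t * (h y - I)) := by
          rw [← integral_mul_const]
          congr 1 with x
          rw [← exp_add]
          ring_nf
      _ ≤ _ := by gcongr; exact_mod_cast hHoeffding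
  refine ⟨hexp_int, fun t => ?_⟩
  calc mgf (fun p => f p - I) (μ.prod ν) t
      = ∫ y, ∫ x, exp (t * (f (x, y) - I)) ∂μ ∂ν := integral_prod_symm _ (hexp_int t)
    _ ≤ ∫ y, exp ((c / 2) ^ 2 * t ^ 2 / 2) * exp (t * (h y - I)) ∂ν :=
      integral_mono_of_nonneg (ae_of_all _ fun y => integral_nonneg fun x => (exp_pos _).le)
        ((hv.integrable_exp_mul t).const_mul _) (ae_of_all _ (hinner t))
    _ = exp ((c / 2) ^ 2 * t ^ 2 / 2) * mgf (fun y => h y - I) ν t := integral_const_mul _ _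
    _ ≤ exp ((c / 2) ^ 2 * t ^ 2 / 2) * exp (v * t ^ 2 / 2) := by gcongr; exact hv.mgf_le t
    _ = exp ((((c / 2) ^ 2 + v : ℝ≥0) : ℝ) * t ^ 2 / 2) := by
      rw [← exp_add]; push_cast; ring_nf

end Prod

lemma measurePreserving_update_prod {ι : Type*} [Fintype ι] [DecidableEq ι] {α : ι → Type*}
    [∀ i, MeasurableSpace (α i)] (μ : ∀ i, Measure (α i)) [∀ i, IsProbabilityMeasure (μ i)]
    (i : ι) :
    MeasurePreserving (fun p : (∀ j, α j) × α i => Function.update p.1 i p.2)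
      ((Measure.pi μ).prod (μ i)) (Measure.pi μ) := by
  refine ⟨measurable_update', (Measure.pi_eq fun s hs => ?_).symm⟩
  have hpre : (fun p : (∀ j, α j) × α i => Function.update p.1 i p.2) ⁻¹' univ.pi s
      = univ.pi (Function.update s i univ) ×ˢ s i := by
    ext ⟨S, x⟩
    simp only [mem_preimage, mem_univ_pi, mem_prod]
    rw [Function.forall_update_iff (p := fun j y => y ∈ s j),
      Function.forall_update_iff (p := fun j t => S j ∈ t)]
    simp [and_comm]
  rw [Measure.map_apply measurable_update' (.univ_pi hs), hpre, Measure.prod_prod, Measure.pi_pi,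
    ← Finset.mul_prod_erase _ _ (Finset.mem_univ i), Function.update_self, measure_univ, one_mul,
    ← Finset.prod_erase_mul _ _ (Finset.mem_univ i)]
  congr 1
  exact Finset.prod_congr rfl fun j hj => by rw [Function.update_of_ne (Finset.ne_of_mem_erase hj)]

def HasBoundedDifferences {ι : Type*} [DecidableEq ι] {α : ι → Type*} (g : (∀ i, α i) → ℝ)
    (c : ℝ) : Prop :=
  ∀ S i (x : α i), |g S - g (Function.update S i x)| ≤ c

/-- McDiarmid's inequality, in sub-Gaussian form. -/
theorem HasBoundedDifferences.hasSubgaussianMGF_sub_integral {n : ℕ} {α : Fin n → Type*}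
    [∀ i, MeasurableSpace (α i)] {μ : ∀ i, Measure (α i)} [∀ i, IsProbabilityMeasure (μ i)]
    {g : (∀ i, α i) → ℝ} {a b : ℝ} {c : ℝ≥0} (hgc : HasBoundedDifferences g c)
    (hg : Measurable g) (hgab : ∀ S, g S ∈ Icc a b) :
    HasSubgaussianMGF (fun S => g S - ∫ T, g T ∂Measure.pi μ) (n * (c / 2) ^ 2)
      (Measure.pi μ) := by
  induction n with
  | zero =>
    have hzero : (fun S => g S - ∫ T, g T ∂Measure.pi μ) = fun _ => 0 := by
      funext S
      rw [show g = fun _ => g S from funext fun T => congrArg g (Subsingleton.elim T S)]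
      simp
    rw [hzero, Nat.cast_zero, zero_mul]
    exact .fun_zero
  | succ n ih =>
    set e := MeasurableEquiv.piFinSuccAbove α 0
    have he := measurePreserving_piFinSuccAbove μ 0
    have hf : Measurable fun p : α 0 × (∀ j, α (Fin.succAbove 0 j)) =>
        g (Fin.insertNth 0 p.1 p.2) :=
      hg.comp e.symm.measurable
    have hf_left (r : ∀ j, α (Fin.succAbove 0 j)) : Measurable fun x => g (Fin.insertNth 0 x r) :=
      hf.comp measurable_prodMk_right
    have hgbar := ih (μ := fun j => μ (Fin.succAbove 0 j))
      (g := fun r => ∫ x, g (Fin.insertNth 0 x r) ∂μ 0)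
      (fun r i x => abs_integral_sub_integral_le
        (.of_mem_Icc a b (hf_left _).aemeasurable (ae_of_all _ fun _ => hgab _))
        (.of_mem_Icc a b (hf_left _).aemeasurable (ae_of_all _ fun _ => hgab _))
        fun x' => by rw [Fin.insertNth_update]; exact hgc _ _ _)
      hf.stronglyMeasurable.integral_prod_left'.measurable
      fun r => integral_mem_Icc_of_forall_mem (hf_left r).aemeasurable fun _ => hgab _
    have hprod := hasSubgaussianMGF_prod_sub_integral hf (fun _ => hgab _)
      (fun x x' r => by simpa using hgc (Fin.insertNth 0 x r) 0 x') hgbar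
    have hI : ∫ p, g (Fin.insertNth 0 p.1 p.2)
          ∂(μ 0).prod (Measure.pi fun j => μ (Fin.succAbove 0 j))
        = ∫ T, g T ∂Measure.pi μ :=
      he.symm.integral_comp' g
    rw [hI, ← he.map_eq] at hprod
    convert hprod.of_map he.measurable.aemeasurable using 1
    · ext S; exact congrArg (g · - _) (e.symm_apply_apply S).symm
    · push_cast; ring

theorem HasBoundedDifferences.ofReal_one_sub_le_measure {n : ℕ} {α : Fin n → Type*}
    [∀ i, MeasurableSpace (α i)] {μ : ∀ i, Measure (α i)} [∀ i, IsProbabilityMeasure (μ i)]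
    {g : (∀ i, α i) → ℝ} {a b : ℝ} {c : ℝ≥0} (hgc : HasBoundedDifferences g c)
    (hg : Measurable g) (hgab : ∀ S, g S ∈ Icc a b) {δ : ℝ} (hδ0 : 0 < δ) (hδ1 : δ ≤ 1) :
    ENNReal.ofReal (1 - δ) ≤
      Measure.pi μ {S | g S ≤ ∫ T, g T ∂Measure.pi μ + c * √(n * log (1 / δ) / 2)} := by
  have hsqrt : √(2 * ((n * (c / 2) ^ 2 : ℝ≥0) : ℝ) * log (1 / δ)) = c * √(n * log (1 / δ) / 2) := by
    rw [show 2 * ((n * (c / 2) ^ 2 : ℝ≥0) : ℝ) * log (1 / δ) = c ^ 2 * (n * log (1 / δ) / 2) by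
      push_cast; ring, sqrt_mul (sq_nonneg _), sqrt_sq c.coe_nonneg]
  refine ((hgc.hasSubgaussianMGF_sub_integral hg hgab).ofReal_one_sub_le_measure_le hδ0 hδ1).trans
    (measure_mono fun S hS => ?_)
  rw [mem_ofPred_eq, hsqrt, sub_le_iff_le_add'] at hS
  exact hS

section Learning

variable {O : Type*} {M : ℕ} {F : (Fin M → O) → O → ℝ} {γ lam : ℝ}

noncomputable def empiricalRisk (F : (Fin M → O) → O → ℝ) (S : Fin M → O) : ℝ :=
  (1 / (M : ℝ)) * ∑ m, F S (S m)

lemma empiricalRisk_mem_Icc (hM : M ≠ 0) (hFb : ∀ S o, F S o ∈ Icc 0 lam) (S : Fin M → O) :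
    empiricalRisk F S ∈ Icc 0 lam := by
  refine ⟨mul_nonneg (by positivity) (Finset.sum_nonneg fun m _ => (hFb S (S m)).1), ?_⟩
  calc empiricalRisk F S ≤ (1 / (M : ℝ)) * ∑ _m : Fin M, lam := by
        unfold empiricalRisk; gcongr with m; exact (hFb S (S m)).2
    _ = lam := by simp [field]

lemma abs_empiricalRisk_sub_le (hFb : ∀ S o, F S o ∈ Icc 0 lam)
    (hstab : ∀ o, HasBoundedDifferences (F · o) (2 * γ)) (S : Fin M → O) (m : Fin M) (o' : O) :
    |empiricalRisk F S - empiricalRisk F (Function.update S m o')| ≤ 2 * γ + lam / M := by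
  set S' := Function.update S m o'
  have hM : (0 : ℝ) < M := by exact_mod_cast m.pos
  -- only the `m`-th summand sees the replaced point itself, at a further cost of `lam`
  have hterm (j : Fin M) : |F S (S j) - F S' (S' j)| ≤ 2 * γ + if j = m then lam else 0 := by
    rcases eq_or_ne j m with rfl | hj
    · have hlam : |F S' (S j) - F S' o'| ≤ lam :=
        abs_sub_le_of_nonneg_of_le (hFb _ _).1 (hFb _ _).2 (hFb _ _).1 (hFb _ _).2
      simpa [S'] using (abs_sub_le _ (F S' (S j)) _).trans (add_le_add (hstab _ S j o') hlam)
    · simpa [S', hj] using hstab (S j) S m o'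
  calc |empiricalRisk F S - empiricalRisk F S'|
      = (1 / (M : ℝ)) * |∑ j, (F S (S j) - F S' (S' j))| := by
        rw [empiricalRisk, empiricalRisk, ← mul_sub, abs_mul, abs_of_pos (by positivity),
          Finset.sum_sub_distrib]
    _ ≤ (1 / (M : ℝ)) * ∑ j : Fin M, (2 * γ + if j = m then lam else 0) := by
        gcongr
        exact (Finset.abs_sum_le_sum_abs _ _).trans (Finset.sum_le_sum fun j _ => hterm j)
    _ = 2 * γ + lam / M := by
        rw [Finset.sum_add_distrib, Finset.sum_ite_eq' Finset.univ m]
        simp [field]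

variable [MeasurableSpace O]

noncomputable def trueRisk (μ : Measure O) (F : (Fin M → O) → O → ℝ) (S : Fin M → O) : ℝ :=
  ∫ o, F S o ∂μ

noncomputable def generalizationGap (μ : Measure O) (F : (Fin M → O) → O → ℝ) (S : Fin M → O) : ℝ :=
  trueRisk μ F S - empiricalRisk F S

variable {μ : Measure O} [IsProbabilityMeasure μ]

lemma measurable_trueRisk (hF : Measurable (Function.uncurry F)) : Measurable (trueRisk μ F) :=
  hF.stronglyMeasurable.integral_prod_right'.measurable

lemma measurable_generalizationGap (hF : Measurable (Function.uncurry F)) :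
    Measurable (generalizationGap μ F) :=
  (measurable_trueRisk hF).sub (by unfold empiricalRisk; fun_prop)

lemma trueRisk_mem_Icc (hF : Measurable (Function.uncurry F)) (hFb : ∀ S o, F S o ∈ Icc 0 lam)
    (S : Fin M → O) : trueRisk μ F S ∈ Icc 0 lam :=
  integral_mem_Icc_of_forall_mem (hF.of_uncurry_left).aemeasurable (hFb S)

lemma generalizationGap_mem_Icc (hM : M ≠ 0) (hF : Measurable (Function.uncurry F))
    (hFb : ∀ S o, F S o ∈ Icc 0 lam) (S : Fin M → O) :
    generalizationGap μ F S ∈ Icc (-lam) lam := by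
  have hR := trueRisk_mem_Icc (μ := μ) hF hFb S
  have hE := empiricalRisk_mem_Icc hM hFb S
  exact ⟨by unfold generalizationGap; linarith [hR.1, hE.2],
    by unfold generalizationGap; linarith [hR.2, hE.1]⟩

lemma abs_trueRisk_sub_le (hF : Measurable (Function.uncurry F))
    (hFb : ∀ S o, F S o ∈ Icc 0 lam) (hstab : ∀ o, HasBoundedDifferences (F · o) (2 * γ))
    (S : Fin M → O) (m : Fin M) (o' : O) :
    |trueRisk μ F S - trueRisk μ F (Function.update S m o')| ≤ 2 * γ :=
  abs_integral_sub_integral_le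
    (.of_mem_Icc 0 lam hF.of_uncurry_left.aemeasurable (ae_of_all _ (hFb _)))
    (.of_mem_Icc 0 lam hF.of_uncurry_left.aemeasurable (ae_of_all _ (hFb _)))
    fun o => hstab o S m o'

lemma hasBoundedDifferences_generalizationGap (hF : Measurable (Function.uncurry F))
    (hFb : ∀ S o, F S o ∈ Icc 0 lam) (hstab : ∀ o, HasBoundedDifferences (F · o) (2 * γ)) :
    HasBoundedDifferences (generalizationGap μ F) (4 * γ + lam / M) := fun S m o' => by
  have hR := abs_le.1 (abs_trueRisk_sub_le (μ := μ) hF hFb hstab S m o')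
  have hE := abs_le.1 (abs_empiricalRisk_sub_le hFb hstab S m o')
  rw [generalizationGap, generalizationGap, abs_le]
  constructor <;> linarith [hR.1, hR.2, hE.1, hE.2]

/-- Replacing `Z_m` by an independent copy `z` does not change the law of the sample, so
`𝔼 F(S, Z_m) = 𝔼 F(S^{m ← z}, z)`. -/
lemma integral_trueRisk_le (hF : Measurable (Function.uncurry F)) (hFb : ∀ S o, F S o ∈ Icc 0 lam)
    (hstab : ∀ o, HasBoundedDifferences (F · o) (2 * γ)) (m : Fin M) :
    ∫ S, trueRisk μ F S ∂Measure.pi (fun _ => μ)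
      ≤ ∫ S, F S (S m) ∂Measure.pi (fun _ => μ) + 2 * γ := by
  set P := Measure.pi fun _ : Fin M => μ
  have hmp : MeasurePreserving (fun p : (Fin M → O) × O => Function.update p.1 m p.2)
      (P.prod μ) P :=
    measurePreserving_update_prod (fun _ => μ) m
  have hF_int : Integrable (Function.uncurry F) (P.prod μ) :=
    .of_mem_Icc 0 lam hF.aemeasurable (ae_of_all _ fun p => hFb p.1 p.2)
  have hupdate_int : Integrable (fun p : (Fin M → O) × O => F (Function.update p.1 m p.2) p.2)
      (P.prod μ) :=
    .of_mem_Icc 0 lam (by fun_prop) (ae_of_all _ fun p => hFb _ _)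
  have hupdate : ∫ p, F (Function.update p.1 m p.2) p.2 ∂(P.prod μ) = ∫ S, F S (S m) ∂P := by
    conv_rhs => rw [← hmp.map_eq]
    have hFm : Measurable fun S : Fin M → O => F S (S m) := by fun_prop
    rw [integral_map hmp.measurable.aemeasurable hFm.aestronglyMeasurable]
    simp
  calc ∫ S, trueRisk μ F S ∂P = ∫ p, F p.1 p.2 ∂(P.prod μ) := (integral_prod _ hF_int).symm
    _ ≤ ∫ p, (F (Function.update p.1 m p.2) p.2 + 2 * γ) ∂(P.prod μ) :=
      integral_mono hF_int (hupdate_int.add (integrable_const _))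
        fun p => by linarith [(abs_le.1 (hstab p.2 p.1 m p.2)).2]
    _ = ∫ S, F S (S m) ∂P + 2 * γ := by
      rw [integral_add hupdate_int (integrable_const _), hupdate]
      simp

lemma integral_generalizationGap_le (hM : M ≠ 0) (hF : Measurable (Function.uncurry F))
    (hFb : ∀ S o, F S o ∈ Icc 0 lam) (hstab : ∀ o, HasBoundedDifferences (F · o) (2 * γ)) :
    ∫ S, generalizationGap μ F S ∂Measure.pi (fun _ => μ) ≤ 2 * γ := by
  set P := Measure.pi fun _ : Fin M => μ
  have hR_int : Integrable (trueRisk μ F) P :=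
    .of_mem_Icc 0 lam (measurable_trueRisk hF).aemeasurable (ae_of_all _ (trueRisk_mem_Icc hF hFb))
  have hF_int (m : Fin M) : Integrable (fun S => F S (S m)) P :=
    .of_mem_Icc 0 lam (by fun_prop) (ae_of_all _ fun S => hFb _ _)
  calc ∫ S, generalizationGap μ F S ∂P
      = ∫ S, trueRisk μ F S ∂P - (1 / (M : ℝ)) * ∑ m, ∫ S, F S (S m) ∂P := by
        unfold generalizationGap empiricalRisk
        rw [integral_sub hR_int ((integrable_finsetSum _ fun m _ => hF_int m).const_mul _),
          integral_const_mul, integral_finsetSum _ fun m _ => hF_int m]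
    _ ≤ ∫ S, trueRisk μ F S ∂P
          - (1 / (M : ℝ)) * ∑ _m : Fin M, (∫ S, trueRisk μ F S ∂P - 2 * γ) := by
        gcongr with m
        linarith [integral_trueRisk_le (μ := μ) hF hFb hstab m]
    _ = 2 * γ := by
        simp [field]

end Learning

/-- high-probability generalization bound for a 2γ-replacement-stable,
bounded expected-loss function `F`. -/
theorem stability_generalization_high_prob
    {O : Type*} [MeasurableSpace O] (μ : Measure O) [IsProbabilityMeasure μ]
    (M : ℕ) (hM : 1 ≤ M)
    (F : (Fin M → O) → O → ℝ) (hF : Measurable (Function.uncurry F))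
    (γ lam : ℝ) (hγ : 0 ≤ γ)
    (hstab : ∀ (S : Fin M → O) (m : Fin M) (o' o : O),
      |F S o - F (Function.update S m o') o| ≤ 2 * γ)
    (hF0 : ∀ S o, 0 ≤ F S o) (hFlam : ∀ S o, F S o ≤ lam)
    (δ : ℝ) (hδ0 : 0 < δ) (hδ1 : δ < 1) :
    ENNReal.ofReal (1 - δ) ≤
      (Measure.pi fun _ : Fin M => μ)
        {S | (∫ o, F S o ∂μ) - (1 / (M : ℝ)) * ∑ m : Fin M, F S (S m)
            ≤ 2 * γ + (4 * M * γ + lam) * Real.sqrt (Real.log (1 / δ) / (2 * M))} := by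
  have hM0 : M ≠ 0 := by omega
  have hFb (S o) : F S o ∈ Icc 0 lam := ⟨hF0 S o, hFlam S o⟩
  have hstab' : ∀ o, HasBoundedDifferences (F · o) (2 * γ) := fun o S m o' => hstab S m o' o
  obtain ⟨o⟩ := nonempty_of_isProbabilityMeasure μ
  have hlam : 0 ≤ lam := (hF0 (fun _ => o) o).trans (hFlam _ o)
  have hgap := hasBoundedDifferences_generalizationGap (μ := μ) hF hFb hstab'
  have htail := hgap.ofReal_one_sub_le_measure (μ := fun _ => μ)
    (c := ⟨4 * γ + lam / M, by positivity⟩) (measurable_generalizationGap hF)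
    (generalizationGap_mem_Icc hM0 hF hFb) hδ0 hδ1.le
  refine htail.trans (measure_mono fun S hS => ?_)
  have hmean := integral_generalizationGap_le (μ := μ) hM0 hF hFb hstab'
  have hwidth : (4 * M * γ + lam) * √(log (1 / δ) / (2 * M))
      = (4 * γ + lam / M) * √(M * log (1 / δ) / 2) := by
    rw [show (M : ℝ) * log (1 / δ) / 2 = M ^ 2 * (log (1 / δ) / (2 * M)) by field_simp,
      sqrt_mul (sq_nonneg _), sqrt_sq M.cast_nonneg]
    field_simp
  have hS' : generalizationGap μ F S ≤ ∫ T, generalizationGap μ F T ∂Measure.pi (fun _ => μ)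
      + (4 * γ + lam / M) * √(M * log (1 / δ) / 2) := hS
  change generalizationGap μ F S ≤ _
  linarith
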